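/- Let T be a string of length n ≥ 1 over a finite alphabet A, and let T⁻ be the string of length n−1 obtained by deleting one character from T at an arbitrary position. Then |n·H₀(T) − (n−1)·H₀(T⁻)| ≤ 4 log₂ n + 3 log₂ |A|. -/

import Mathlib

open Finset

noncomputable def H0 {A : Type*} [Fintype A] [DecidableEq A] (T : List A) : ℝ :=
  -∑ c : A, ((T.count c : ℝ) / T.length) * Real.logb 2 ((T.count c : ℝ) / T.length)

/-! With `f x = x log₂ x`, one has `n H₀(T) = f n - ∑_c f n_c`. Deleting one `c` lowers only `n`
and `n_c` by one, so the difference is `Δf (n - 1) - Δf (n_c - 1)` with `Δf m = f (m + 1) - f m`.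
Since `m log(1 + 1/m) ≤ 1`, `0 ≤ Δf m ≤ log₂ (m + 1) + 1 / log 2 ≤ 3 log₂ (m + 1)` for `m ≥ 1`
(and `Δf 0 = 0`), so both increments lie in `[0, 3 log₂ n]`. -/

open Real

noncomputable def mulLogb (x : ℝ) : ℝ := x * logb 2 x

@[simp] lemma mulLogb_zero : mulLogb 0 = 0 := by simp [mulLogb]

@[simp] lemma mulLogb_one : mulLogb 1 = 0 := by simp [mulLogb]

lemma mulLogb_le_mulLogb_add_one {x : ℝ} (hx : 0 ≤ x) : mulLogb x ≤ mulLogb (x + 1) := by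
  have hlog : logb 2 x ≤ logb 2 (x + 1) := by
    rcases hx.eq_or_lt with rfl | hx
    · simp
    · exact logb_le_logb_of_le (by norm_num) hx (by linarith)
  calc x * logb 2 x ≤ x * logb 2 (x + 1) := mul_le_mul_of_nonneg_left hlog hx
    _ ≤ (x + 1) * logb 2 (x + 1) := by
      have : 0 ≤ logb 2 (x + 1) := logb_nonneg (by norm_num) (by linarith)
      nlinarith

lemma mul_log_add_one_sub_log_le {x : ℝ} (hx : 0 < x) : x * (log (x + 1) - log x) ≤ 1 := by
  have h := log_le_sub_one_of_pos (x := (x + 1) / x) (by positivity)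
  rw [log_div (by positivity) hx.ne', show (x + 1) / x - 1 = x⁻¹ by field_simp; ring] at h
  calc x * (log (x + 1) - log x) ≤ x * x⁻¹ := mul_le_mul_of_nonneg_left h hx.le
    _ = 1 := mul_inv_cancel₀ hx.ne'

lemma mulLogb_add_one_sub_le {x : ℝ} (hx : 0 ≤ x) :
    mulLogb (x + 1) - mulLogb x ≤ logb 2 (x + 1) + 2 := by
  rcases hx.eq_or_lt with rfl | hx
  · simp
  have hlog2 : 1 / 2 < log 2 := by linarith [log_two_gt_d9]
  have key : x * (logb 2 (x + 1) - logb 2 x) ≤ 2 := by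
    rw [logb, logb, ← sub_div, ← mul_div_assoc, div_le_iff₀ (by linarith)]
    linarith [mul_log_add_one_sub_log_le hx]
  unfold mulLogb
  linarith

lemma mulLogb_succ_sub_le (m : ℕ) :
    mulLogb (m + 1) - mulLogb m ≤ 3 * logb 2 (m + 1) := by
  rcases m.eq_zero_or_pos with rfl | hm
  · simp
  have hm : (1 : ℝ) ≤ m := by exact_mod_cast hm
  have hlog : 1 ≤ logb 2 ((m : ℝ) + 1) := by
    rw [le_logb_iff_rpow_le (by norm_num) (by positivity)]
    norm_num; linarith
  linarith [mulLogb_add_one_sub_le m.cast_nonneg]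

section Entropy

variable {A : Type*} [Fintype A] [DecidableEq A]

lemma sum_count_eq_length (T : List A) : ∑ c : A, T.count c = T.length := by
  simpa using Multiset.sum_count_eq_card (s := univ) (m := (T : Multiset A)) (by simp)

lemma length_mul_H0 (T : List A) :
    T.length * H0 T = mulLogb T.length - ∑ c : A, mulLogb (T.count c) := by
  have hterm (c : A) : (T.length : ℝ) * ((T.count c / T.length) * logb 2 (T.count c / T.length))
      = mulLogb (T.count c) - T.count c * logb 2 T.length := by
    rcases eq_or_ne (T.count c) 0 with hc | hc
    · simp [hc, mulLogb]
    have hn : T.length ≠ 0 := by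
      have := List.count_le_length (a := c) (l := T); omega
    rw [logb_div (by exact_mod_cast hc) (by exact_mod_cast hn), mulLogb]
    field_simp
  have hsum : ∑ c : A, (T.count c : ℝ) = T.length := by exact_mod_cast sum_count_eq_length T
  rw [H0, mul_neg, mul_sum, sum_congr rfl fun c _ => hterm c, sum_sub_distrib, ← sum_mul, hsum,
    mulLogb]
  ring

lemma H0_perm {T T' : List A} (h : T.Perm T') : H0 T = H0 T' := by
  simp only [H0, h.count_eq, h.length_eq]

lemma length_mul_H0_cons_sub (c : A) (L : List A) :
    (L.length + 1 : ℝ) * H0 (c :: L) - L.length * H0 L =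
      (mulLogb (L.length + 1) - mulLogb L.length)
        - (mulLogb (L.count c + 1) - mulLogb (L.count c)) := by
  have hcount : ∑ d : A, mulLogb ((c :: L).count d) - ∑ d : A, mulLogb (L.count d) =
      mulLogb (L.count c + 1) - mulLogb (L.count c) := by
    rw [← sum_sub_distrib, sum_eq_single c]
    · simp
    · intro d _ hd
      simp [Ne.symm hd]
    · simp
  have := length_mul_H0 (c :: L)
  rw [List.length_cons, Nat.cast_succ] at this
  rw [this, length_mul_H0 L]
  linarith

end Entropy

theorem stmt1_general {A : Type*} [Fintype A] [DecidableEq A]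
    (T T₁ T₂ : List A) (c : A)
    (hT : T = T₁ ++ c :: T₂) :
    |(T.length : ℝ) * H0 T - ((T.length : ℝ) - 1) * H0 (T₁ ++ T₂)| ≤
      4 * Real.logb 2 T.length + 3 * Real.logb 2 (Fintype.card A) := by
  set L := T₁ ++ T₂
  have hperm : T.Perm (c :: L) := hT ▸ List.perm_middle
  have hlen : (T.length : ℝ) = L.length + 1 := by simp [hperm.length_eq]
  rw [H0_perm hperm, hlen, add_sub_cancel_right, length_mul_H0_cons_sub]
  have hcount : (L.count c : ℝ) + 1 ≤ L.length + 1 := by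
    exact_mod_cast Nat.succ_le_succ List.count_le_length
  have hbound : |(mulLogb (L.length + 1) - mulLogb L.length)
      - (mulLogb (L.count c + 1) - mulLogb (L.count c))| ≤ 3 * logb 2 (L.length + 1) :=
    abs_sub_le_of_nonneg_of_le
      (sub_nonneg.2 (mulLogb_le_mulLogb_add_one L.length.cast_nonneg))
      (mulLogb_succ_sub_le L.length)
      (sub_nonneg.2 (mulLogb_le_mulLogb_add_one (L.count c).cast_nonneg))
      ((mulLogb_succ_sub_le _).trans (by gcongr; norm_num))
  have hlogn : 0 ≤ logb 2 ((L.length : ℝ) + 1) := logb_nonneg (by norm_num) (by linarith)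
  have hlogA : 0 ≤ logb 2 (Fintype.card A) :=
    logb_nonneg (by norm_num) (by exact_mod_cast Fintype.card_pos_iff.2 ⟨c⟩)
  linarith

theorem stmt1 {A : Type*} [Fintype A] [DecidableEq A]
    (T T₁ T₂ : List A) (c : A)
    (hT : T = T₁ ++ c :: T₂) (hn : 1 ≤ T.length) :
    |(T.length : ℝ) * H0 T - ((T.length : ℝ) - 1) * H0 (T₁ ++ T₂)| ≤
      4 * Real.logb 2 T.length + 3 * Real.logb 2 (Fintype.card A) :=
  stmt1_general T T₁ T₂ c hT
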